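/- arXiv:1306.6391 — 2 statements merged into one kernel-verified Lean document; each statement's English description precedes it below -/
import Mathlib

section
/- Let X be a compact metric space, f : X → X a homeomorphism, and (A_n) a nested sequence of compact sets where A_n is a disjoint union of m_n nonempty compact sets D_{n,0},…,D_{n,m_n−1} with f(D_{n,i}) ⊆ interior(D_{n,i+1 mod m_n}), each component of A_{n+1} contained in a component of A_n, m_n strictly increasing with m_n dividing m_{n+1}, and max_i diam(D_{n,i}) → 0. Then C = ⋂_n A_n is a nonempty compact totally disconnected f-invariant set, and f restricted to C is minimal (every orbit is dense in C). -/
open Filter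

/-- Generalized adding machine: given nested families `Aₙ = ⨆_{i<mₙ} D_{n,i}` of
disjoint nonempty compact sets with `f(D_{n,i}) ⊆ int D_{n,(i+1) mod mₙ}`, each
component of `A_{n+1}` contained in a component of `Aₙ`, `mₙ` strictly increasing
with `mₙ ∣ m_{n+1}`, and diameters of components tending to `0`, the set
`C = ⋂ₙ Aₙ` is a nonempty compact totally disconnected `f`-invariant set on which
`f` is minimal (every orbit is dense in `C`). -/
theorem adding_machine_minimal
    {X : Type*} [MetricSpace X] [CompactSpace X]
    (f : X ≃ₜ X) (m : ℕ → ℕ) (hm : ∀ n, 0 < m n)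
    (hmono : StrictMono m) (hdvd : ∀ n, m n ∣ m (n + 1))
    (D : ℕ → ℕ → Set X)
    (hDcompact : ∀ n i, i < m n → IsCompact (D n i))
    (hDnonempty : ∀ n i, i < m n → (D n i).Nonempty)
    (hDdisj : ∀ n i j, i < m n → j < m n → i ≠ j → Disjoint (D n i) (D n j))
    (hDmap : ∀ n i, i < m n → f '' (D n i) ⊆ interior (D n ((i + 1) % m n)))
    (hcomp : ∀ n i, i < m (n + 1) → ∃ j < m n, D (n + 1) i ⊆ D n j)
    (hdiam : ∀ ε : ℝ, 0 < ε → ∃ N : ℕ, ∀ n ≥ N, ∀ i < m n,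
        Metric.diam (D n i) < ε) :
    (⋂ n, ⋃ i ∈ Set.Iio (m n), D n i).Nonempty ∧
    IsCompact (⋂ n, ⋃ i ∈ Set.Iio (m n), D n i) ∧
    IsTotallyDisconnected (⋂ n, ⋃ i ∈ Set.Iio (m n), D n i) ∧
    (f '' (⋂ n, ⋃ i ∈ Set.Iio (m n), D n i) = ⋂ n, ⋃ i ∈ Set.Iio (m n), D n i) ∧
    ∀ x ∈ ⋂ n, ⋃ i ∈ Set.Iio (m n), D n i,
      (⋂ n, ⋃ i ∈ Set.Iio (m n), D n i) ⊆
        closure (Set.range fun k : ℕ => (⇑f)^[k] x) := by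
  set A : ℕ → Set X := fun n => ⋃ i ∈ Set.Iio (m n), D n i with hAdef
  have hgoal : (⋂ n, ⋃ i ∈ Set.Iio (m n), D n i) = ⋂ n, A n := rfl
  rw [hgoal]
  set C : Set X := ⋂ n, A n with hCdef
  -- basic facts about A
  have hAcompact : ∀ n, IsCompact (A n) :=
    fun n => (Set.finite_Iio _).isCompact_biUnion (fun i hi => hDcompact n i hi)
  have hAclosed : ∀ n, IsClosed (A n) := fun n => (hAcompact n).isClosed
  have hmemA : ∀ n x, x ∈ A n → ∃ i, i < m n ∧ x ∈ D n i := by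
    intro n x hx
    simpa [hAdef] using hx
  have hsubA : ∀ n i, i < m n → D n i ⊆ A n := by
    intro n i hi
    exact Set.subset_biUnion_of_mem (show i ∈ Set.Iio (m n) from hi)
  have hAnonempty : ∀ n, (A n).Nonempty := by
    intro n
    obtain ⟨x, hx⟩ := hDnonempty n 0 (hm n)
    exact ⟨x, hsubA n 0 (hm n) hx⟩
  have hAanti : ∀ n, A (n + 1) ⊆ A n := by
    intro n x hx
    obtain ⟨i, hi, hxi⟩ := hmemA _ x hx
    obtain ⟨j, hj, hsub'⟩ := hcomp n i hi
    exact hsubA n j hj (hsub' hxi)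
  have hAanti' : Antitone A := antitone_nat_of_succ_le hAanti
  -- C nonempty and compact
  have hCnonempty : C.Nonempty :=
    IsCompact.nonempty_iInter_of_sequence_nonempty_isCompact_isClosed A hAanti
      hAnonempty (hAcompact 0) hAclosed
  have hCclosed : IsClosed C := isClosed_iInter fun n => hAclosed n
  have hCcompact : IsCompact C := hCclosed.isCompact
  have hmemC : ∀ x, x ∈ C ↔ ∀ n, x ∈ A n := fun x => Set.mem_iInter
  -- orbit tracking
  have htrack : ∀ n i, i < m n → ∀ x ∈ D n i, ∀ k : ℕ,
      (⇑f)^[k] x ∈ D n ((i + k) % m n) := by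
    intro n i hi x hx k
    induction k with
    | zero => simpa [Nat.mod_eq_of_lt hi] using hx
    | succ k ih =>
      have h1 : f ((⇑f)^[k] x) ∈ interior (D n (((i + k) % m n + 1) % m n)) :=
        hDmap n _ (Nat.mod_lt _ (hm n)) ⟨_, ih, rfl⟩
      have h2 : ((i + k) % m n + 1) % m n = (i + (k + 1)) % m n := by
        conv_lhs => rw [Nat.add_mod]
        conv_rhs => rw [← Nat.add_assoc, Nat.add_mod]
        simp
      rw [Function.iterate_succ_apply', ← h2]
      exact interior_subset h1
  -- forward invariance of A and C
  have hfA : ∀ n, f '' A n ⊆ A n := by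
    intro n y hy
    obtain ⟨x, hx, rfl⟩ := hy
    obtain ⟨i, hi, hxi⟩ := hmemA n x hx
    exact hsubA n _ (Nat.mod_lt _ (hm n)) (interior_subset (hDmap n i hi ⟨x, hxi, rfl⟩))
  have hfC : f '' C ⊆ C := by
    intro y hy
    obtain ⟨x, hx, rfl⟩ := hy
    rw [hmemC]
    intro n
    exact hfA n ⟨x, (hmemC x).1 hx n, rfl⟩
  -- minimality
  have hmin : ∀ x ∈ C, C ⊆ closure (Set.range fun k : ℕ => (⇑f)^[k] x) := by
    intro x hx z hz
    rw [Metric.mem_closure_iff]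
    intro ε hε
    obtain ⟨N, hN⟩ := hdiam ε hε
    obtain ⟨i, hi, hxi⟩ := hmemA N x ((hmemC x).1 hx N)
    obtain ⟨j, hj, hzj⟩ := hmemA N z ((hmemC z).1 hz N)
    refine ⟨(⇑f)^[m N + j - i] x, ⟨_, rfl⟩, ?_⟩
    have hk : (i + (m N + j - i)) % m N = j := by
      have : i + (m N + j - i) = m N + j := by omega
      rw [this, Nat.add_mod_left, Nat.mod_eq_of_lt hj]
    have hmem' : (⇑f)^[m N + j - i] x ∈ D N j := by
      have := htrack N i hi x hxi (m N + j - i)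
      rwa [hk] at this
    calc dist z ((⇑f)^[m N + j - i] x)
        ≤ Metric.diam (D N j) :=
          Metric.dist_le_diam_of_mem ((hDcompact N j hj).isBounded) hzj hmem'
      _ < ε := hN N le_rfl j hj
  -- total disconnectedness
  have hTD : IsTotallyDisconnected C := by
    intro S hSC hSpre x hx y hy
    by_contra hne
    have hd : 0 < dist x y := dist_pos.mpr hne
    obtain ⟨N, hN⟩ := hdiam (dist x y) hd
    obtain ⟨i, hi, hxi⟩ := hmemA N x ((hmemC x).1 (hSC hx) N)
    obtain ⟨j, hj, hyj⟩ := hmemA N y ((hmemC y).1 (hSC hy) N)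
    by_cases hij : i = j
    · subst hij
      exact absurd (Metric.dist_le_diam_of_mem ((hDcompact N i hi).isBounded) hxi hyj)
        (not_le.mpr (hN N le_rfl i hi))
    · -- separate D N i from the union of the others
      set E : Set X := ⋃ l ∈ {l | l ∈ Set.Iio (m N) ∧ l ≠ i}, D N l with hEdef
      have hEcompact : IsCompact E :=
        (Set.Finite.subset (Set.finite_Iio (m N)) (fun l hl => hl.1)).isCompact_biUnion
          (fun l hl => hDcompact N l hl.1)
      have hdisjE : Disjoint (D N i) E := by
        rw [Set.disjoint_iff]
        rintro z ⟨hz1, hz2⟩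
        obtain ⟨l, hl, hzl⟩ := by simpa [hEdef] using hz2
        exact (hDdisj N i l hi hl.1 (Ne.symm hl.2)).le_bot ⟨hz1, hzl⟩
      obtain ⟨U, V, hU, hV, hDU, hEV, hUV⟩ :=
        SeparatedNhds.of_isCompact_isCompact (hDcompact N i hi) hEcompact hdisjE
      have hScover : S ⊆ U ∪ V := by
        intro z hz
        obtain ⟨l, hl, hzl⟩ := hmemA N z ((hmemC z).1 (hSC hz) N)
        by_cases hli : l = i
        · exact Or.inl (hDU (hli ▸ hzl))
        · exact Or.inr (hEV (Set.mem_biUnion ⟨hl, hli⟩ hzl))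
      have hyV : y ∈ V := hEV (Set.mem_biUnion ⟨hj, fun h => hij h.symm⟩ hyj)
      obtain ⟨z, hzS, hzU, hzV⟩ := hSpre U V hU hV hScover ⟨x, hx, hDU hxi⟩ ⟨y, hy, hyV⟩
      exact hUV.le_bot ⟨hzU, hzV⟩
  -- full invariance via the eventual image
  have hfCeq : f '' C = C := by
    set B : ℕ → Set X := fun k => (⇑f)^[k] '' C with hBdef
    have hBcompact : ∀ k, IsCompact (B k) :=
      fun k => hCcompact.image (f.continuous.iterate k)
    have hBnonempty : ∀ k, (B k).Nonempty := fun k => hCnonempty.image _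
    have hBanti : ∀ k, B (k + 1) ⊆ B k := by
      intro k y hy
      obtain ⟨x, hx, rfl⟩ := hy
      rw [Function.iterate_succ_apply]
      exact ⟨f x, hfC ⟨x, hx, rfl⟩, rfl⟩
    set C' : Set X := ⋂ k, B k with hC'def
    have hC'nonempty : C'.Nonempty :=
      IsCompact.nonempty_iInter_of_sequence_nonempty_isCompact_isClosed B hBanti
        hBnonempty (hBcompact 0) (fun k => (hBcompact k).isClosed)
    have hC'closed : IsClosed C' := isClosed_iInter fun k => (hBcompact k).isClosed
    have hC'subC : C' ⊆ C := by
      intro z hz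
      have := Set.mem_iInter.1 hz 0
      simpa [hBdef] using this
    have hfC' : ∀ z ∈ C', f z ∈ C' := by
      intro z hz
      rw [Set.mem_iInter]
      intro k
      have hzk : z ∈ B k := Set.mem_iInter.1 hz k
      obtain ⟨w, hw, rfl⟩ := hzk
      have : f ((⇑f)^[k] w) = (⇑f)^[k] (f w) :=
        (Function.iterate_succ_apply' (⇑f) k w).symm.trans (Function.iterate_succ_apply (⇑f) k w)
      rw [this]
      exact ⟨f w, hfC ⟨w, hw, rfl⟩, rfl⟩
    have horbC' : ∀ z ∈ C', ∀ k : ℕ, (⇑f)^[k] z ∈ C' := by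
      intro z hz k
      induction k with
      | zero => simpa using hz
      | succ k ih => rw [Function.iterate_succ_apply']; exact hfC' _ ih
    obtain ⟨z, hz⟩ := hC'nonempty
    have hCsubC' : C ⊆ C' := by
      refine fun w hw => ?_
      have h1 : C ⊆ closure (Set.range fun k : ℕ => (⇑f)^[k] z) := hmin z (hC'subC hz)
      have h2 : closure (Set.range fun k : ℕ => (⇑f)^[k] z) ⊆ C' := by
        apply hC'closed.closure_subset_iff.2
        rintro _ ⟨k, rfl⟩
        exact horbC' z hz k
      exact h2 (h1 hw)
    refine Set.Subset.antisymm hfC ?_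
    intro w hw
    have : w ∈ B 1 := Set.mem_iInter.1 (hCsubC' hw) 1
    obtain ⟨v, hv, rfl⟩ := this
    exact ⟨v, hv, by simp⟩
  exact ⟨hCnonempty, hCcompact, hTD, hfCeq, hmin⟩
end

section
/- Let X be a compact metric space and f : X → X a homeomorphism. Suppose (A_n) is a sequence of nonempty compact sets with f(A_n) ⊆ A_n and A_{n+1} ⊆ A_n, where each A_n is a disjoint union of m_n compact sets cyclically permuted by f (f(D_{n,i}) ⊆ D_{n,i+1 mod m_n}) and max_i diam(D_{n,i}) → 0 as n → ∞. Then f restricted to C = ⋂_n A_n is uniquely ergodic: there is exactly one f-invariant Borel probability measure supported on C, and it assigns mass 1/m_n to each set D_{n,i} ∩ C. -/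
open Filter MeasureTheory Topology Set Metric
open scoped ENNReal

/-!
Existence is the Krylov–Bogolyubov theorem for `f` restricted to the closed invariant set
`C = ⋂ₙ Aₙ`. For uniqueness, let `ν` be invariant and carried by `C`. Since `f` maps `D n i` into
`D n (i + 1)`, invariance makes `ν (D n i)` nondecreasing around the cycle, hence constant, and the
`m n` disjoint pieces cover `C`, so each has mass `1 / m n`. Two such measures therefore agree on
every piece; for a closed `K` the pieces of diameter `< ε` meeting `K` cover `K ∩ C` and lie in the
`ε`-thickening of `K`, so `ν₁ K ≤ ν₂ (cthickening ε K) → ν₂ K`, and measures agreeing on closed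
sets are equal.
-/

section KrylovBogolyubov

variable {Y : Type*} [TopologicalSpace Y] [MeasurableSpace Y]

noncomputable def empiricalMeasure (g : Y → Y) (n : ℕ) (y : Y) : Measure Y :=
  (n : ℝ≥0∞)⁻¹ • birkhoffSum g Measure.dirac n y

instance isProbabilityMeasure_empiricalMeasure (g : Y → Y) (n : ℕ) [NeZero n] (y : Y) :
    IsProbabilityMeasure (empiricalMeasure g n y) := by
  constructor
  simp [empiricalMeasure, birkhoffSum, ENNReal.inv_mul_cancel (NeZero.ne (n : ℝ≥0∞))]

theorem integral_empiricalMeasure [OpensMeasurableSpace Y] (g : Y → Y) (n : ℕ) (y : Y)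
    (φ : BoundedContinuousFunction Y ℝ) :
    ∫ x, φ x ∂(empiricalMeasure g n y) = birkhoffAverage ℝ g φ n y := by
  simp only [empiricalMeasure, birkhoffAverage, birkhoffSum, integral_smul_measure,
    integral_finsetSum_measure fun k _ => φ.integrable (Measure.dirac (g^[k] y))]
  simp [integral_dirac' _ _ φ.continuous.stronglyMeasurable]

variable [TopologicalSpace.MetrizableSpace Y] [CompactSpace Y] [BorelSpace Y]

/-- Krylov–Bogolyubov: a cluster point of the empirical measures along an orbit is invariant,
since the Birkhoff averages of a bounded function along the orbits of `y` and `g y` differ by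
`O(1/n)`. -/
theorem exists_isProbabilityMeasure_measurePreserving [Nonempty Y] {g : Y → Y}
    (hg : Continuous g) : ∃ μ : Measure Y, IsProbabilityMeasure μ ∧ MeasurePreserving g μ μ := by
  let y : Y := Classical.arbitrary Y
  let u : ℕ → ProbabilityMeasure Y := fun n => ⟨empiricalMeasure g (n + 1) y, inferInstance⟩
  obtain ⟨μ, hμ⟩ := exists_clusterPt_of_compactSpace (map u atTop)
  refine ⟨μ, inferInstance, hg.measurable,
    ext_of_forall_integral_eq_of_IsFiniteMeasure fun φ => ?_⟩
  let ψ : BoundedContinuousFunction Y ℝ := φ.compContinuous ⟨g, hg⟩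
  let F : ProbabilityMeasure Y → ℝ := fun ν => ∫ x, ψ x ∂ν - ∫ x, φ x ∂ν
  have hF : Continuous F :=
    (ProbabilityMeasure.continuous_integral_boundedContinuousFunction ψ).sub
      (ProbabilityMeasure.continuous_integral_boundedContinuousFunction φ)
  have hFu : Tendsto (F ∘ u) atTop (𝓝 0) := by
    refine ((tendsto_birkhoffAverage_apply_sub_birkhoffAverage' (𝕜 := ℝ) φ.isBounded_range g
      y).comp (tendsto_add_atTop_nat 1)).congr fun n => ?_
    simp only [Function.comp, F, u, ProbabilityMeasure.coe_mk, integral_empiricalMeasure]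
    simp only [ψ, birkhoffAverage, birkhoffSum, BoundedContinuousFunction.compContinuous_apply,
      ContinuousMap.coe_mk, ← Function.iterate_succ_apply, Function.iterate_succ_apply']
  have hFμ : F μ = 0 := eq_of_nhds_neBot (hμ.map hF.continuousAt (tendsto_map' hFu))
  rw [integral_map hg.aemeasurable φ.continuous.aestronglyMeasurable]
  exact sub_eq_zero.mp hFμ

end KrylovBogolyubov

theorem exists_isProbabilityMeasure_measurePreserving_of_mapsTo {X : Type*} [TopologicalSpace X]
    [TopologicalSpace.MetrizableSpace X] [CompactSpace X] [MeasurableSpace X] [BorelSpace X]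
    {g : X → X} (hg : Continuous g) {s : Set X} (hs : IsClosed s) (hne : s.Nonempty)
    (hgs : MapsTo g s s) :
    ∃ μ : Measure X, IsProbabilityMeasure μ ∧ MeasurePreserving g μ μ ∧ μ s = 1 := by
  have : CompactSpace s := isCompact_iff_compactSpace.mp hs.isCompact
  have : Nonempty s := hne.to_subtype
  obtain ⟨ν, hν, hνg⟩ := exists_isProbabilityMeasure_measurePreserving (hg.restrict hgs)
  refine ⟨ν.map Subtype.val, Measure.isProbabilityMeasure_map measurable_subtype_coe.aemeasurable,
    ⟨hg.measurable, ?_⟩, ?_⟩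
  · rw [Measure.map_map hg.measurable measurable_subtype_coe, ← hgs.restrict_commutes,
      ← Measure.map_map measurable_subtype_coe hνg.measurable, hνg.map_eq]
  · rw [Measure.map_apply measurable_subtype_coe hs.measurableSet, Subtype.coe_preimage_self,
      measure_univ]

theorem le_of_le_succ_mod {α : Type*} [Preorder α] {m : ℕ} {a : ℕ → α}
    (h : ∀ i < m, a i ≤ a ((i + 1) % m)) {i j : ℕ} (hi : i < m) (hj : j < m) : a i ≤ a j := by
  have hm : 0 < m := Nat.zero_lt_of_lt hi
  have hstep : ∀ k, a i ≤ a ((i + k) % m) := by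
    intro k
    induction k with
    | zero => rw [Nat.add_zero, Nat.mod_eq_of_lt hi]
    | succ k ih =>
      refine ih.trans ?_
      simpa only [Nat.mod_add_mod, ← Nat.add_assoc] using h _ (Nat.mod_lt _ hm)
  have hij : (i + (j + m - i)) % m = j := by
    rw [Nat.add_sub_cancel' (by omega), Nat.add_mod_right, Nat.mod_eq_of_lt hj]
  simpa only [hij] using hstep (j + m - i)

theorem Set.mapsTo_biUnion_Iio_of_cyclic {X : Type*} {f : X → X} {m : ℕ} {P : ℕ → Set X}
    (hmaps : ∀ i < m, MapsTo f (P i) (P ((i + 1) % m))) :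
    MapsTo f (⋃ i ∈ Iio m, P i) (⋃ i ∈ Iio m, P i) :=
  mapsTo_iUnion₂.2 fun i hi => (hmaps i hi).mono_right <|
    subset_biUnion_of_mem (u := P) (Nat.mod_lt _ (Nat.zero_lt_of_lt hi))

theorem measure_biUnion_Iio {X : Type*} [MeasurableSpace X] (μ : Measure X) {m : ℕ}
    {P : ℕ → Set X} (hmeas : ∀ i < m, MeasurableSet (P i))
    (hdisj : ∀ i j, i < m → j < m → i ≠ j → Disjoint (P i) (P j)) :
    μ (⋃ i ∈ Iio m, P i) = ∑ i ∈ Finset.range m, μ (P i) := by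
  rw [← Finset.coe_range, Finset.set_biUnion_coe]
  exact measure_biUnion_finset (fun i hi j hj => hdisj i j (Finset.mem_range.1 hi)
    (Finset.mem_range.1 hj)) fun i hi => hmeas i (Finset.mem_range.1 hi)

theorem MeasureTheory.MeasurePreserving.measure_eq_inv_of_cyclic {X : Type*} [MeasurableSpace X]
    {μ : Measure X} {f : X → X} (hf : MeasurePreserving f μ μ) {m : ℕ} {P : ℕ → Set X}
    (hmeas : ∀ i < m, MeasurableSet (P i))
    (hdisj : ∀ i j, i < m → j < m → i ≠ j → Disjoint (P i) (P j))
    (hmaps : ∀ i < m, MapsTo f (P i) (P ((i + 1) % m))) (hunion : μ (⋃ i ∈ Iio m, P i) = 1)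
    {i : ℕ} (hi : i < m) : μ (P i) = (m : ℝ≥0∞)⁻¹ := by
  have hstep : ∀ j < m, μ (P j) ≤ μ (P ((j + 1) % m)) := fun j hj =>
    (measure_mono (hmaps j hj)).trans_eq
      (hf.measure_preimage (hmeas _ (Nat.mod_lt _ (Nat.zero_lt_of_lt hj))).nullMeasurableSet)
  have hconst : ∀ j < m, μ (P j) = μ (P i) := fun j hj =>
    le_antisymm (le_of_le_succ_mod hstep hj hi) (le_of_le_succ_mod hstep hi hj)
  refine ENNReal.eq_inv_of_mul_eq_one_left ?_
  rw [← hunion, measure_biUnion_Iio μ hmeas hdisj,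
    Finset.sum_congr rfl fun j hj => hconst j (Finset.mem_range.1 hj), Finset.sum_const,
    Finset.card_range, nsmul_eq_mul, mul_comm]

section ShrinkingPieces

variable {X : Type*} [PseudoMetricSpace X] [MeasurableSpace X] {μ ν : Measure X}

theorem measure_le_measure_cthickening_of_pieces {m : ℕ} {P : ℕ → Set X} {ε : ℝ}
    (hmeas : ∀ i < m, MeasurableSet (P i))
    (hdisj : ∀ i j, i < m → j < m → i ≠ j → Disjoint (P i) (P j))
    (hbdd : ∀ i < m, Bornology.IsBounded (P i)) (hdiam : ∀ i < m, diam (P i) ≤ ε)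
    (hμ : μ (⋃ i ∈ Iio m, P i)ᶜ = 0) (heq : ∀ i < m, μ (P i) = ν (P i)) (K : Set X) :
    μ K ≤ ν (cthickening ε K) := by
  classical
  let S := (Finset.range m).filter fun i => (P i ∩ K).Nonempty
  have hS : ∀ i ∈ S, i < m := fun i hi => Finset.mem_range.1 (Finset.mem_filter.1 hi).1
  have hcover : K ∩ ⋃ i ∈ Iio m, P i ⊆ ⋃ i ∈ S, P i := by
    rintro x ⟨hxK, hx⟩
    obtain ⟨i, hi, hxi⟩ := mem_iUnion₂.1 hx
    exact mem_biUnion (Finset.mem_filter.2 ⟨Finset.mem_range.2 hi, x, hxi, hxK⟩) hxi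
  have hthick : ⋃ i ∈ S, P i ⊆ cthickening ε K := by
    refine iUnion₂_subset fun i hi => ?_
    obtain ⟨z, hzP, hzK⟩ := (Finset.mem_filter.1 hi).2
    exact fun y hy => mem_cthickening_of_dist_le y z ε K hzK
      ((dist_le_diam_of_mem (hbdd i (hS i hi)) hy hzP).trans (hdiam i (hS i hi)))
  calc μ K = μ (K ∩ ⋃ i ∈ Iio m, P i) := (measure_inter_conull hμ).symm
    _ ≤ ∑ i ∈ S, μ (P i) := (measure_mono hcover).trans (measure_biUnion_finset_le _ _)
    _ = ∑ i ∈ S, ν (P i) := Finset.sum_congr rfl fun i hi => heq i (hS i hi)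
    _ = ν (⋃ i ∈ S, P i) := (measure_biUnion_finset (fun i hi j hj => hdisj i j (hS i hi)
        (hS j hj)) fun i hi => hmeas i (hS i hi)).symm
    _ ≤ ν (cthickening ε K) := measure_mono hthick

theorem measure_le_of_forall_le_measure_cthickening [OpensMeasurableSpace X] [IsFiniteMeasure ν]
    {K : Set X} (hK : IsClosed K) (h : ∀ ε > 0, μ K ≤ ν (cthickening ε K)) : μ K ≤ ν K :=
  ge_of_tendsto ((tendsto_measure_cthickening_of_isClosed ⟨1, one_pos, measure_ne_top _ _⟩
    hK).mono_left nhdsWithin_le_nhds) (eventually_nhdsWithin_of_forall (s := Ioi 0) h)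

variable {m : ℕ → ℕ} {D : ℕ → ℕ → Set X}

theorem measure_le_of_shrinking_pieces [OpensMeasurableSpace X] [IsFiniteMeasure ν]
    (hmeas : ∀ n i, i < m n → MeasurableSet (D n i))
    (hdisj : ∀ n i j, i < m n → j < m n → i ≠ j → Disjoint (D n i) (D n j))
    (hbdd : ∀ n i, i < m n → Bornology.IsBounded (D n i))
    (hdiam : ∀ ε : ℝ, 0 < ε → ∃ N : ℕ, ∀ n ≥ N, ∀ i < m n, diam (D n i) < ε)
    (hμ : ∀ n, μ (⋃ i ∈ Iio (m n), D n i)ᶜ = 0) (heq : ∀ n i, i < m n → μ (D n i) = ν (D n i))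
    {K : Set X} (hK : IsClosed K) : μ K ≤ ν K := by
  refine measure_le_of_forall_le_measure_cthickening hK fun ε hε => ?_
  obtain ⟨N, hN⟩ := hdiam ε hε
  exact measure_le_measure_cthickening_of_pieces (hmeas N) (hdisj N) (hbdd N)
    (fun i hi => (hN N le_rfl i hi).le) (hμ N) (heq N) K

theorem MeasureTheory.Measure.ext_of_shrinking_pieces [BorelSpace X] [IsFiniteMeasure μ]
    [IsFiniteMeasure ν] (hmeas : ∀ n i, i < m n → MeasurableSet (D n i))
    (hdisj : ∀ n i j, i < m n → j < m n → i ≠ j → Disjoint (D n i) (D n j))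
    (hbdd : ∀ n i, i < m n → Bornology.IsBounded (D n i))
    (hdiam : ∀ ε : ℝ, 0 < ε → ∃ N : ℕ, ∀ n ≥ N, ∀ i < m n, diam (D n i) < ε)
    (hμ : ∀ n, μ (⋃ i ∈ Iio (m n), D n i)ᶜ = 0) (hν : ∀ n, ν (⋃ i ∈ Iio (m n), D n i)ᶜ = 0)
    (heq : ∀ n i, i < m n → μ (D n i) = ν (D n i)) : μ = ν := by
  have hclosed : ∀ K, IsClosed K → μ K = ν K := fun K hK =>
    le_antisymm (measure_le_of_shrinking_pieces hmeas hdisj hbdd hdiam hμ heq hK)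
      (measure_le_of_shrinking_pieces hmeas hdisj hbdd hdiam hν
        (fun n i hi => (heq n i hi).symm) hK)
  refine ext_of_generate_finite _ ?_ isPiSystem_isClosed hclosed (hclosed _ isClosed_univ)
  rw [BorelSpace.measurable_eq (α := X), borel_eq_generateFrom_isClosed]

end ShrinkingPieces

/-- Unique ergodicity of the generalized adding machine: given nested forward
invariant families `Aₙ = ⨆_{i<mₙ} D_{n,i}` of disjoint compact sets cyclically
permuted by `f`, with diameters of the pieces tending to `0`, there is exactly
one `f`-invariant Borel probability measure carried by `C = ⋂ₙ Aₙ`, and it gives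
mass `1/mₙ` to each `D_{n,i} ∩ C`. -/
theorem adding_machine_uniquely_ergodic
    {X : Type*} [MetricSpace X] [CompactSpace X]
    [MeasurableSpace X] [BorelSpace X]
    (f : X ≃ₜ X) (m : ℕ → ℕ) (hm : ∀ n, 0 < m n)
    (D : ℕ → ℕ → Set X)
    (hDcompact : ∀ n i, i < m n → IsCompact (D n i))
    (hDnonempty : ∀ n i, i < m n → (D n i).Nonempty)
    (hDdisj : ∀ n i j, i < m n → j < m n → i ≠ j → Disjoint (D n i) (D n j))
    (hDmap : ∀ n i, i < m n → f '' (D n i) ⊆ D n ((i + 1) % m n))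
    (hnested : ∀ n, (⋃ i ∈ Set.Iio (m (n + 1)), D (n + 1) i) ⊆
        ⋃ i ∈ Set.Iio (m n), D n i)
    (hdiam : ∀ ε : ℝ, 0 < ε → ∃ N : ℕ, ∀ n ≥ N, ∀ i < m n,
        Metric.diam (D n i) < ε) :
    ∃ μ : Measure X,
      (IsProbabilityMeasure μ ∧ μ.map f = μ ∧
        μ (⋂ n, ⋃ i ∈ Set.Iio (m n), D n i) = 1 ∧
        ∀ n, ∀ i < m n,
          μ (D n i ∩ ⋂ n', ⋃ j ∈ Set.Iio (m n'), D n' j) = ((m n : ENNReal))⁻¹) ∧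
      ∀ ν : Measure X, IsProbabilityMeasure ν → ν.map f = ν →
        ν (⋂ n, ⋃ i ∈ Set.Iio (m n), D n i) = 1 → ν = μ := by
  set A : ℕ → Set X := fun n => ⋃ i ∈ Iio (m n), D n i
  have hmeas : ∀ n i, i < m n → MeasurableSet (D n i) := fun n i hi =>
    (hDcompact n i hi).isClosed.measurableSet
  have hA : ∀ n, IsClosed (A n) := fun n =>
    (finite_Iio _).isClosed_biUnion fun i hi => (hDcompact n i hi).isClosed
  have hC : IsClosed (⋂ n, A n) := isClosed_iInter hA
  have hCne : (⋂ n, A n).Nonempty :=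
    IsCompact.nonempty_iInter_of_sequence_nonempty_isCompact_isClosed A hnested
      (fun n => ⟨_, mem_biUnion (hm n) (hDnonempty n 0 (hm n)).some_mem⟩) (hA 0).isCompact hA
  have hDmaps : ∀ n i, i < m n → MapsTo f (D n i) (D n ((i + 1) % m n)) := fun n i hi =>
    mapsTo_iff_image_subset.2 (hDmap n i hi)
  have hfull : ∀ ν : Measure X, IsProbabilityMeasure ν → ν (⋂ n, A n) = 1 → ∀ n, ν (A n)ᶜ = 0 :=
    fun ν _ hν n => measure_mono_null (compl_subset_compl.2 (iInter_subset A n))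
      ((prob_compl_eq_zero_iff hC.measurableSet).2 hν)
  have hmass : ∀ ν : Measure X, IsProbabilityMeasure ν → MeasurePreserving f ν ν →
      ν (⋂ n, A n) = 1 → ∀ n i, i < m n → ν (D n i) = (m n : ℝ≥0∞)⁻¹ :=
    fun ν _ hf hν n i hi => hf.measure_eq_inv_of_cyclic (hmeas n) (hDdisj n) (hDmaps n)
      ((prob_compl_eq_zero_iff (hA n).measurableSet).1 (hfull ν ‹_› hν n)) hi
  obtain ⟨μ, hμ, hμf, hμC⟩ := exists_isProbabilityMeasure_measurePreserving_of_mapsTo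
    f.continuous hC hCne (mapsTo_iInter_iInter fun n => mapsTo_biUnion_Iio_of_cyclic (hDmaps n))
  refine ⟨μ, ⟨hμ, hμf.map_eq, hμC, fun n i hi => ?_⟩, fun ν hν hνf hνC => ?_⟩
  · rw [measure_inter_conull ((prob_compl_eq_zero_iff hC.measurableSet).2 hμC),
      hmass μ hμ hμf hμC n i hi]
  · have hνf : MeasurePreserving f ν ν := ⟨f.measurable, hνf⟩
    refine Measure.ext_of_shrinking_pieces hmeas hDdisj
      (fun n i hi => (hDcompact n i hi).isBounded) hdiam (hfull ν hν hνC) (hfull μ hμ hμC)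
      fun n i hi => ?_
    rw [hmass ν hν hνf hνC n i hi, hmass μ hμ hμf hμC n i hi]
end
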